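/- The CNOT gate is locally equivalent (up to a global phase) to A(π/2, 0, 0): there exist α ∈ ℝ and local gates k1, k2 (each of the form a⊗b with a, b ∈ SU(2)) such that CNOT = e^{iα} · k1 · A(π/2, 0, 0) · k2. -/

import Mathlib

set_option maxHeartbeats 1000000

open Matrix Complex

noncomputable section

/-- Pauli matrix σx. -/
def sigmaX : Matrix (Fin 2) (Fin 2) ℂ := !![0, 1; 1, 0]
/-- Pauli matrix σy. -/
def sigmaY : Matrix (Fin 2) (Fin 2) ℂ := !![0, -I; I, 0]
/-- Pauli matrix σz. -/
def sigmaZ : Matrix (Fin 2) (Fin 2) ℂ := !![1, 0; 0, -1]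

/-- Kronecker product of two 2×2 complex matrices, as a 4×4 matrix
(row-major ordering: entry ((2i+k),(2j+l)) is `A i j * B k l`). -/
def kron (A B : Matrix (Fin 2) (Fin 2) ℂ) : Matrix (Fin 4) (Fin 4) ℂ :=
  Matrix.of fun i j =>
    A ⟨i.val / 2, by have := i.isLt; omega⟩ ⟨j.val / 2, by have := j.isLt; omega⟩ *
    B ⟨i.val % 2, by have := i.isLt; omega⟩ ⟨j.val % 2, by have := j.isLt; omega⟩

/-- Membership in SU(2): 2×2 unitary with determinant 1. -/
def InSU2 (k : Matrix (Fin 2) (Fin 2) ℂ) : Prop := kᴴ * k = 1 ∧ k.det = 1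

/-- The gate A(c1,c2,c3) = exp((i/2)(c1 σx⊗σx + c2 σy⊗σy + c3 σz⊗σz)). -/
def Agate (c1 c2 c3 : ℝ) : Matrix (Fin 4) (Fin 4) ℂ :=
  NormedSpace.exp ((I / 2) •
    ((c1 : ℂ) • kron sigmaX sigmaX + (c2 : ℂ) • kron sigmaY sigmaY +
      (c3 : ℂ) • kron sigmaZ sigmaZ))

/-- The CNOT gate. -/
def CNOT : Matrix (Fin 4) (Fin 4) ℂ := !![1,0,0,0; 0,1,0,0; 0,0,0,1; 0,0,1,0]

/-! ### Auxiliary material -/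

def Umat : Matrix (Fin 4) (Fin 4) ℂ :=
  ((Real.sqrt 2 / 2 : ℝ) : ℂ) • !![1,0,0,1; 0,1,1,0; 0,1,-1,0; 1,0,0,-1]

lemma h2 : ((Real.sqrt 2 :ℝ):ℂ) * ((Real.sqrt 2:ℝ):ℂ) = 2 := by
  norm_cast; exact Real.mul_self_sqrt (by norm_num)

lemma hss : ((Real.sqrt 2/2 :ℝ):ℂ) * ((Real.sqrt 2/2 :ℝ):ℂ) = 1/2 := by
  push_cast; linear_combination h2 / 4

lemma UU : Umat * Umat = 1 := by
  ext i j
  fin_cases i <;> fin_cases j <;>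
    simp [Umat, Matrix.mul_apply, Fin.sum_univ_succ, Matrix.one_apply] <;>
    linear_combination h2 / 2

lemma kronXX : kron sigmaX sigmaX = !![0,0,0,1; 0,0,1,0; 0,1,0,0; 1,0,0,0] := by
  ext i j; fin_cases i <;> fin_cases j <;>
    simp [kron, sigmaX, show ((0:Fin 4):ℕ) = 0 from rfl, show ((1:Fin 4):ℕ) = 1 from rfl,
      show ((2:Fin 4):ℕ) = 2 from rfl, show ((3:Fin 4):ℕ) = 3 from rfl,
      show (⟨0,by omega⟩ : Fin 2) = 0 from rfl, show (⟨1,by omega⟩ : Fin 2) = 1 from rfl,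
      Matrix.vecHead, Matrix.vecTail]

def vfun : Fin 4 → ℂ := ![(Real.pi/4 : ℂ) * I, (Real.pi/4 : ℂ) * I,
  -((Real.pi/4 : ℂ) * I), -((Real.pi/4 : ℂ) * I)]

lemma diag4 (a b c d : ℂ) :
    diagonal ![a,b,c,d] = !![a,0,0,0; 0,b,0,0; 0,0,c,0; 0,0,0,d] := by
  ext i j
  fin_cases i <;> fin_cases j <;>
    simp [Matrix.diagonal_apply, Matrix.vecHead, Matrix.vecTail]

lemma diagEq : diagonal vfun = !![(Real.pi/4 : ℂ) * I,0,0,0; 0,(Real.pi/4 : ℂ) * I,0,0;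
    0,0,-((Real.pi/4 : ℂ) * I),0; 0,0,0,-((Real.pi/4 : ℂ) * I)] := by
  rw [show vfun = ![(Real.pi/4 : ℂ) * I, (Real.pi/4 : ℂ) * I,
    -((Real.pi/4 : ℂ) * I), -((Real.pi/4 : ℂ) * I)] from rfl, diag4]

lemma conjEq : (I / 2) • ((((Real.pi/2 : ℝ)) : ℂ) • kron sigmaX sigmaX + ((0:ℝ) : ℂ) • kron sigmaY sigmaY +
      ((0:ℝ) : ℂ) • kron sigmaZ sigmaZ) = Umat * diagonal vfun * Umat⁻¹ := by
  rw [Matrix.inv_eq_right_inv UU, diagEq, kronXX]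
  ext i j
  fin_cases i <;> fin_cases j <;>
    simp [Umat, Matrix.mul_apply, Fin.sum_univ_succ, Matrix.vecHead, Matrix.vecTail] <;>
    push_cast <;> ring_nf <;>
    first
      | linear_combination (Real.pi : ℂ) * I / 8 * h2
      | linear_combination (-(Real.pi : ℂ) * I / 4) * h2
      | linear_combination ((Real.pi : ℂ) * I / 4) * h2
      | linear_combination (-(Real.pi : ℂ) * I * 3 / 8) * h2
      | linear_combination ((Real.pi : ℂ) * I * 3 / 8) * h2
      | linear_combination (-(Real.pi : ℂ) * I / 2) * h2
      | linear_combination ((Real.pi : ℂ) * I / 2) * h2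
      | linear_combination (-(Real.pi : ℂ) * I * 5 / 8) * h2
      | linear_combination ((Real.pi : ℂ) * I * 5 / 8) * h2
      | linear_combination (-(Real.pi : ℂ) * I / 8) * h2

lemma exp_vfun : NormedSpace.exp vfun =
    ![Complex.exp ((Real.pi/4 : ℂ) * I), Complex.exp ((Real.pi/4 : ℂ) * I),
      Complex.exp (-((Real.pi/4 : ℂ) * I)), Complex.exp (-((Real.pi/4 : ℂ) * I))] := by
  funext i
  have h : (NormedSpace.exp vfun) i = NormedSpace.exp (vfun i) :=
    NormedSpace.map_exp (Pi.evalAlgHom ℂ (fun _ : Fin 4 => ℂ) i) (continuous_apply i) vfun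
  rw [h, ← Complex.exp_eq_exp_ℂ]
  fin_cases i <;> simp [vfun, Matrix.vecHead, Matrix.vecTail]

lemma expv : Complex.exp ((Real.pi/4 : ℂ) * I)
    = ((Real.sqrt 2/2 : ℝ) : ℂ) + ((Real.sqrt 2/2 : ℝ) : ℂ) * I := by
  have h : (Real.pi/4 : ℂ) = ((Real.pi/4 : ℝ) : ℂ) := by push_cast; ring
  rw [h, Complex.exp_mul_I, ← Complex.ofReal_cos, ← Complex.ofReal_sin,
    Real.cos_pi_div_four, Real.sin_pi_div_four]

lemma expv' : Complex.exp (-((Real.pi/4 : ℂ) * I))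
    = ((Real.sqrt 2/2 : ℝ) : ℂ) - ((Real.sqrt 2/2 : ℝ) : ℂ) * I := by
  have h : -((Real.pi/4 : ℂ) * I) = ((-(Real.pi/4) : ℝ) : ℂ) * I := by push_cast; ring
  rw [h, Complex.exp_mul_I, ← Complex.ofReal_cos, ← Complex.ofReal_sin,
    Real.cos_neg, Real.sin_neg, Real.cos_pi_div_four, Real.sin_pi_div_four]
  push_cast; ring

lemma Aval : Agate (Real.pi/2) 0 0 =
    ((Real.sqrt 2/2 : ℝ) : ℂ) • !![1,0,0,I; 0,1,I,0; 0,I,1,0; I,0,0,1] := by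
  rw [Agate, conjEq, Matrix.exp_conj _ _ ⟨⟨Umat, Umat, UU, UU⟩, rfl⟩,
    Matrix.exp_diagonal, exp_vfun, diag4, Matrix.inv_eq_right_inv UU]
  ext i j
  fin_cases i <;> fin_cases j <;>
    simp [Umat, Matrix.mul_apply, Fin.sum_univ_succ, expv, expv',
      Matrix.vecHead, Matrix.vecTail] <;> ring_nf <;>
    first
      | linear_combination (I/2) * h2
      | linear_combination (-(I/2)) * h2
      | linear_combination (1/2 : ℂ) * h2
      | linear_combination (-(1/2) : ℂ) * h2
      | linear_combination (((Real.sqrt 2:ℝ):ℂ)/4 - I/2) * h2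
      | linear_combination (((Real.sqrt 2:ℝ):ℂ)/4 + I/2) * h2
      | linear_combination (-((Real.sqrt 2:ℝ):ℂ)/4 - I/2) * h2
      | linear_combination (-((Real.sqrt 2:ℝ):ℂ)/4 + I/2) * h2
      | linear_combination (((Real.sqrt 2:ℝ):ℂ)*I/4 - I/2) * h2
      | linear_combination (((Real.sqrt 2:ℝ):ℂ)*I/4 + I/2) * h2
      | linear_combination (-((Real.sqrt 2:ℝ):ℂ)*I/4 - I/2) * h2
      | linear_combination (-((Real.sqrt 2:ℝ):ℂ)*I/4 + I/2) * h2
      | linear_combination (((Real.sqrt 2:ℝ):ℂ)*I/4) * h2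
      | linear_combination (-((Real.sqrt 2:ℝ):ℂ)*I/4) * h2
      | linear_combination (((Real.sqrt 2:ℝ):ℂ)/4) * h2
      | linear_combination (-((Real.sqrt 2:ℝ):ℂ)/4) * h2

lemma kron_smul_left (c : ℂ) (A B : Matrix (Fin 2) (Fin 2) ℂ) :
    kron (c • A) B = c • kron A B := by
  ext i j; simp [kron]; ring

lemma kron_smul_right (c : ℂ) (A B : Matrix (Fin 2) (Fin 2) ℂ) :
    kron A (c • B) = c • kron A B := by
  ext i j; simp [kron]; ring

lemma prodEq : kron !![(1+I)/2, (1+I)/2; (-1+I)/2, (1-I)/2] !![-1, I; I, -1] *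
      !![1,0,0,I; 0,1,I,0; 0,I,1,0; I,0,0,1] * kron !![I, I; I, -I] 1 =
      (2 - 2*I) • CNOT := by
  ext i j
  fin_cases i <;> fin_cases j <;>
    simp [kron, CNOT, Matrix.mul_apply, Fin.sum_univ_succ,
      show ((0:Fin 4):ℕ) = 0 from rfl, show ((1:Fin 4):ℕ) = 1 from rfl,
      show ((2:Fin 4):ℕ) = 2 from rfl, show ((3:Fin 4):ℕ) = 3 from rfl,
      show (⟨0,by omega⟩ : Fin 2) = 0 from rfl, show (⟨1,by omega⟩ : Fin 2) = 1 from rfl,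
      Matrix.vecHead, Matrix.vecTail, Matrix.one_apply] <;>
    first
      | ring1
      | linear_combination (I^2 + I - 2) * Complex.I_sq
      | linear_combination (I - I^2) * Complex.I_sq
      | linear_combination (2*I - 2) * Complex.I_sq

/-- The CNOT is locally equivalent, up to a global phase, to A((Real.pi / 2) 0 0). -/
theorem cnot_locally_equivalent :
    ∃ (α : ℝ) (a1 b1 a2 b2 : Matrix (Fin 2) (Fin 2) ℂ),
      InSU2 a1 ∧ InSU2 b1 ∧ InSU2 a2 ∧ InSU2 b2 ∧
      CNOT = Complex.exp (I * (α : ℂ)) •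
        (kron a1 b1 * Agate (Real.pi / 2) 0 0 * kron a2 b2) := by
  refine ⟨Real.pi/4, !![(1+I)/2, (1+I)/2; (-1+I)/2, (1-I)/2],
    ((Real.sqrt 2/2 : ℝ) : ℂ) • !![-1, I; I, -1],
    ((Real.sqrt 2/2 : ℝ) : ℂ) • !![I, I; I, -I], 1, ?_, ?_, ?_, ?_, ?_⟩
  · constructor
    · ext i j
      fin_cases i <;> fin_cases j <;>
        simp [Matrix.mul_apply, Matrix.conjTranspose_apply, Fin.sum_univ_succ,
          Matrix.one_apply, Matrix.vecHead, Matrix.vecTail, Complex.conj_I, map_div₀,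
          map_add, map_sub, map_neg, _root_.map_one, Complex.star_def,
          show (starRingEnd ℂ) 2 = 2 from map_ofNat _ 2] <;>
        first
          | ring1
          | linear_combination (-1/2 : ℂ) * Complex.I_sq
          | linear_combination (1/2 : ℂ) * Complex.I_sq
          | linear_combination (-1 : ℂ) * Complex.I_sq
          | linear_combination (1 : ℂ) * Complex.I_sq
    · rw [Matrix.det_fin_two_of]
      linear_combination (-1/2 : ℂ) * Complex.I_sq
  · constructor
    · ext i j
      fin_cases i <;> fin_cases j <;>
        simp [Matrix.mul_apply, Matrix.conjTranspose_apply, Fin.sum_univ_succ,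
          Matrix.one_apply, Matrix.vecHead, Matrix.vecTail, Complex.conj_I, Complex.star_def,
          Complex.conj_ofReal, show (starRingEnd ℂ) 2 = 2 from map_ofNat _ 2] <;>
        first
          | ring1
          | linear_combination ((1 - I^2)/4) * h2 + (-1/2 : ℂ) * Complex.I_sq
          | linear_combination ((I^2 - 1)/4) * h2 + (1/2 : ℂ) * Complex.I_sq
          | linear_combination (-(I^2)/2) * h2 + (-1 : ℂ) * Complex.I_sq
          | linear_combination ((I^2)/2) * h2 + (1 : ℂ) * Complex.I_sq
          | linear_combination (1/2 : ℂ) * h2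
          | linear_combination (-1/2 : ℂ) * h2
          | linear_combination ((3 - I^2)/4) * h2 + (-1/2 : ℂ) * Complex.I_sq
          | linear_combination ((I^2 - 3)/4) * h2 + (1/2 : ℂ) * Complex.I_sq
    · rw [Matrix.det_smul, Matrix.det_fin_two_of]
      simp only [Fintype.card_fin]
      linear_combination (1 - I^2) * hss + (-1/2 : ℂ) * Complex.I_sq
  · constructor
    · ext i j
      fin_cases i <;> fin_cases j <;>
        simp [Matrix.mul_apply, Matrix.conjTranspose_apply, Fin.sum_univ_succ,
          Matrix.one_apply, Matrix.vecHead, Matrix.vecTail, Complex.conj_I, Complex.star_def,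
          Complex.conj_ofReal, show (starRingEnd ℂ) 2 = 2 from map_ofNat _ 2] <;>
        first
          | ring1
          | linear_combination ((1 - I^2)/4) * h2 + (-1/2 : ℂ) * Complex.I_sq
          | linear_combination ((I^2 - 1)/4) * h2 + (1/2 : ℂ) * Complex.I_sq
          | linear_combination (-(I^2)/4) * h2 + (-1/2 : ℂ) * Complex.I_sq
          | linear_combination (-(I^2)/2) * h2 + (-1 : ℂ) * Complex.I_sq
          | linear_combination ((I^2)/2) * h2 + (1 : ℂ) * Complex.I_sq
          | linear_combination (1/2 : ℂ) * h2
          | linear_combination (-1/2 : ℂ) * h2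
          | linear_combination ((1 - I^2)/2) * h2 + (-1 : ℂ) * Complex.I_sq
          | linear_combination ((I^2 - 1)/2) * h2 + (1 : ℂ) * Complex.I_sq
    · rw [Matrix.det_smul, Matrix.det_fin_two_of]
      simp only [Fintype.card_fin]
      linear_combination (-2*I^2) * hss + (-1 : ℂ) * Complex.I_sq
  · exact ⟨by simp, Matrix.det_one⟩
  · have hphase : Complex.exp (I * ((Real.pi/4 : ℝ):ℂ)) =
        ((Real.sqrt 2/2 : ℝ) : ℂ) + ((Real.sqrt 2/2 : ℝ) : ℂ) * I := by
      rw [mul_comm, show ((Real.pi/4 : ℝ):ℂ) = (Real.pi/4 : ℂ) by push_cast; ring, expv]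
    rw [Aval, hphase, kron_smul_right, kron_smul_left]
    simp only [smul_mul_assoc, mul_smul_comm, smul_smul]
    rw [prodEq]
    simp only [smul_smul]
    nth_rewrite 1 [show CNOT = (1:ℂ) • CNOT from (one_smul ℂ CNOT).symm]
    congr 1
    push_cast
    linear_combination (((((Real.sqrt 2:ℝ):ℂ))^2 + 2) * (I^2 - 3)/8 + ((((Real.sqrt 2:ℝ):ℂ))^2 + 2)/4) * h2 + (1/2 : ℂ) * Complex.I_sq

end
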